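/- arXiv:2010.13945 — 3 statements merged into one kernel-verified Lean document; each statement's English description precedes it below -/
import Mathlib

section
/- Let N ≥ 2, let p = (p_1,…,p_N) ∈ ℝ^N, and let K be the N×N symmetric matrix with entries K_ij = p_j δ_{iN} + p_i δ_{jN} − p_N δ_{ij} (i.e., K_ij = −p_N δ_{ij} for i,j < N, K_Nj = p_j for j < N, K_iN = p_i for i < N, and K_NN = p_N). Then the characteristic polynomial of K satisfies det(K − γI) = (−1)^N (γ + p_N)^{N−2}(γ² − |p|²). -/
/-!
`K + p_N I = e pᵀ + p eᵀ` with `e` the last basis vector has rank two: it factors as `U V` through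
`R²`, and Sylvester's identity `X ^ 2 χ_{UV} = X ^ N χ_{VU}` reduces its characteristic polynomial
to that of the `2 × 2` matrix `V U = !![p ⬝ e, p ⬝ p; e ⬝ e, e ⬝ p]`.
-/

open Finset

/-- The matrix `K(p)` with `K i j = p j δ_{iN} + p i δ_{jN} - p N δ_{ij}`. -/
def Kmat {n : ℕ} (p : Fin (n + 1) → ℝ) : Matrix (Fin (n + 1)) (Fin (n + 1)) ℝ :=
  Matrix.of fun i j =>
    (if i = Fin.last n then p j else 0) + (if j = Fin.last n then p i else 0)
      - (if i = j then p (Fin.last n) else 0)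

open Polynomial

namespace Matrix

variable {R m : Type*} [CommRing R] [Fintype m]

omit [Fintype m] in
theorem vecMulVec_add_vecMulVec_eq_mul (u v : m → R) :
    vecMulVec u v + vecMulVec v u = (of fun i => ![u i, v i]) * of ![v, u] := by
  ext i j
  simp [mul_apply, Fin.sum_univ_two, vecMulVec_apply]

theorem of_mul_of_eq_dotProduct (u v : m → R) :
    of ![v, u] * (of fun i => ![u i, v i]) = !![v ⬝ᵥ u, v ⬝ᵥ v; u ⬝ᵥ u, u ⬝ᵥ v] := by
  ext k l
  fin_cases k <;> fin_cases l <;> rfl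

theorem charpoly_vecMulVec_add_vecMulVec [DecidableEq m] (u v : m → R)
    (hm : 2 ≤ Fintype.card m) :
    (vecMulVec u v + vecMulVec v u).charpoly =
      X ^ (Fintype.card m - 2) * ((X - C (u ⬝ᵥ v)) ^ 2 - C ((u ⬝ᵥ u) * (v ⬝ᵥ v))) := by
  rw [vecMulVec_add_vecMulVec_eq_mul, charpoly_mul_comm_of_le _ _ (by simpa using hm),
    Fintype.card_fin, of_mul_of_eq_dotProduct, charpoly, det_fin_two, dotProduct_comm v u]
  simp only [charmatrix_apply, of_apply, cons_val', cons_val_zero, cons_val_one, empty_val',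
    cons_val_fin_one, Fin.isValue, diagonal_apply_eq, ne_eq, zero_ne_one, one_ne_zero,
    not_false_eq_true, diagonal_apply_ne, C_mul]
  ring

end Matrix

open Matrix

theorem Kmat_eq_vecMulVec_add_vecMulVec {n : ℕ} (p : Fin (n + 1) → ℝ) :
    Kmat p = vecMulVec (Pi.single (Fin.last n) 1) p + vecMulVec p (Pi.single (Fin.last n) 1)
      - p (Fin.last n) • 1 := by
  ext i j
  simp only [Kmat, vecMulVec_apply, Pi.single_apply, of_apply, Matrix.sub_apply, Matrix.add_apply,
    Matrix.smul_apply, one_apply, smul_eq_mul]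
  split_ifs <;> simp_all

/-- Characteristic polynomial identity:
`det(K - γI) = (-1)^N (γ + p_N)^{N-2} (γ² - |p|²)` for `N = n + 2`. -/
theorem Kmat_char_det (n : ℕ) (p : Fin (n + 2) → ℝ) (γ : ℝ) :
    (Kmat p - γ • (1 : Matrix (Fin (n + 2)) (Fin (n + 2)) ℝ)).det =
      (-1 : ℝ) ^ (n + 2) * (γ + p (Fin.last (n + 1))) ^ n *
        (γ ^ 2 - ∑ i, p i ^ 2) := by
  set e : Fin (n + 2) → ℝ := Pi.single (Fin.last (n + 1)) 1
  have hK : Kmat p - γ • 1 =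
      -(scalar _ (γ + p (Fin.last (n + 1))) - (vecMulVec e p + vecMulVec p e)) := by
    rw [Kmat_eq_vecMulVec_add_vecMulVec, scalar_apply, ← smul_one_eq_diagonal]
    module
  have he : e ⬝ᵥ e = 1 := by simp [e]
  have hep : e ⬝ᵥ p = p (Fin.last (n + 1)) := by simp [e]
  have hp : p ⬝ᵥ p = ∑ i, p i ^ 2 := by simp [dotProduct, sq]
  rw [hK, det_neg, ← eval_charpoly, charpoly_vecMulVec_add_vecMulVec _ _ (by simp),
    Fintype.card_fin, show n + 1 + 1 - 2 = n by omega]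
  simp only [eval_mul, eval_pow, eval_sub, eval_X, eval_C, he, hep, hp]
  ring
end

section
/- Let 0 < λ ≤ Λ and define the Pucci minimal operator on real symmetric N×N matrices by M⁻(M) = λ·(sum of positive eigenvalues of M) + Λ·(sum of negative eigenvalues of M). Let p ∈ ℝ^N and let K be the symmetric matrix with K_ij = −p_N δ_{ij} for i,j < N, K_iN = K_Ni = p_i for i < N, K_NN = p_N. Then M⁻(K) ≥ −Λ(N−1)|p|. -/
open Finset

/-- Euclidean norm of a vector in `ℝ^N`. -/
noncomputable def enorm {N : ℕ} (p : Fin N → ℝ) : ℝ :=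
  Real.sqrt (∑ i, p i ^ 2)

/-!
`K(p) = e pᵀ + p eᵀ - p_N I` with `e = e_N`, and the rank-two part satisfies
`2 ⟪e, v⟫ ⟪p, v⟫ ≥ (p_N - |p|) |v|²`, so every eigenvalue of `K(p)` is at least `-|p|`.
The diagonal of `K(p)` contains both `p_N` and `-p_N`; since a diagonal entry is a convex
combination of the eigenvalues, some eigenvalue is nonnegative. Hence at most `N - 1`
eigenvalues are negative, each at least `-|p|`, and the positive part only helps.
-/

open Matrix
open scoped RealInnerProductSpace

theorem inner_sub_norm_mul_norm_mul_sq_le {E : Type*} [NormedAddCommGroup E]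
    [InnerProductSpace ℝ E] (x y v : E) :
    (⟪x, y⟫ - ‖x‖ * ‖y‖) * ‖v‖ ^ 2 ≤ 2 * ⟪x, v⟫ * ⟪y, v⟫ := by
  rcases eq_or_ne x 0 with rfl | hx
  · simp
  rcases eq_or_ne y 0 with rfl | hy
  · simp
  set a := ‖x‖
  set b := ‖y‖
  have hab : 0 < a * b := mul_pos (norm_pos_iff.2 hx) (norm_pos_iff.2 hy)
  -- `4ab ⟪x, v⟫ ⟪y, v⟫ = ⟪b x + a y, v⟫² - ⟪b x - a y, v⟫²`; bound the second square by Cauchy–Schwarz.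
  have hcs : ⟪b • x - a • y, v⟫ ^ 2 ≤ 2 * (a * b) * (a * b - ⟪x, y⟫) * ‖v‖ ^ 2 := by
    have hnorm : ‖b • x - a • y‖ ^ 2 = 2 * (a * b) * (a * b - ⟪x, y⟫) := by
      rw [norm_sub_sq_real, norm_smul, norm_smul, real_inner_smul_left, real_inner_smul_right,
        Real.norm_of_nonneg (norm_nonneg y), Real.norm_of_nonneg (norm_nonneg x)]
      ring
    calc ⟪b • x - a • y, v⟫ ^ 2 ≤ (‖b • x - a • y‖ * ‖v‖) ^ 2 :=
          sq_le_sq' (neg_le_of_abs_le (abs_real_inner_le_norm _ _)) (real_inner_le_norm _ _)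
      _ = _ := by rw [mul_pow, hnorm]
  rw [inner_sub_left, real_inner_smul_left, real_inner_smul_left] at hcs
  refine le_of_mul_le_mul_left ?_ (by positivity : 0 < 2 * (a * b))
  nlinarith [sq_nonneg (b * ⟪x, v⟫ + a * ⟪y, v⟫)]

theorem Finset.neg_card_sub_one_mul_le_sum_min_zero {ι : Type*} [Fintype ι] {m : ℝ}
    (hm : 0 ≤ m) (f : ι → ℝ) (hf : ∀ i, -m ≤ f i) {j : ι} (hj : 0 ≤ f j) :
    -(((Fintype.card ι : ℝ) - 1) * m) ≤ ∑ i, min (f i) 0 := by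
  classical
  rw [← add_sum_erase _ _ (mem_univ j), min_eq_right hj, zero_add]
  have h := card_nsmul_le_sum (univ.erase j) (fun i => min (f i) 0) (-m)
    fun i _ => le_min (hf i) (neg_nonpos.2 hm)
  rw [card_erase_of_mem (mem_univ j), card_univ, nsmul_eq_mul,
    Nat.cast_pred (Fintype.card_pos_iff.2 ⟨j⟩)] at h
  linarith

namespace Matrix.IsHermitian

variable {𝕜 : Type*} [RCLike 𝕜] {n : Type*} [Fintype n] [DecidableEq n] {A : Matrix n n 𝕜}

theorem le_eigenvalues_of_forall_le (hA : A.IsHermitian) {c : ℝ}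
    (h : ∀ x : EuclideanSpace 𝕜 n, c * ‖x‖ ^ 2 ≤ RCLike.re (star ⇑x ⬝ᵥ A *ᵥ ⇑x)) (i : n) :
    c ≤ hA.eigenvalues i := by
  simpa [hA.eigenvectorBasis.orthonormal.1 i, ← hA.eigenvalues_eq] using h (hA.eigenvectorBasis i)

theorem re_diag_eq_sum (hA : A.IsHermitian) (i : n) :
    RCLike.re (A i i) = ∑ j, ‖hA.eigenvectorBasis j i‖ ^ 2 * hA.eigenvalues j := by
  conv_lhs => rw [hA.spectral_theorem]
  rw [Unitary.conjStarAlgAut_apply, mul_apply, map_sum]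
  refine sum_congr rfl fun j _ => ?_
  rw [mul_diagonal, star_apply, eigenvectorUnitary_apply, Function.comp_apply, mul_right_comm,
    RCLike.star_def, RCLike.mul_conj]
  norm_cast

theorem sum_norm_sq_eigenvectorBasis_apply (hA : A.IsHermitian) (i : n) :
    ∑ j, ‖hA.eigenvectorBasis j i‖ ^ 2 = 1 := by
  have h := congr_fun₂ (Unitary.coe_mul_star_self hA.eigenvectorUnitary) i i
  simp_rw [Unitary.coe_star, mul_apply, star_apply, eigenvectorUnitary_apply, RCLike.star_def,
    RCLike.mul_conj, one_apply_eq] at h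
  exact_mod_cast h

theorem exists_re_diag_le_eigenvalues (hA : A.IsHermitian) (i : n) :
    ∃ j, RCLike.re (A i i) ≤ hA.eigenvalues j := by
  have : Nonempty n := ⟨i⟩
  obtain ⟨j, hj⟩ := Finite.exists_max hA.eigenvalues
  refine ⟨j, ?_⟩
  calc RCLike.re (A i i) = ∑ k, ‖hA.eigenvectorBasis k i‖ ^ 2 * hA.eigenvalues k :=
        hA.re_diag_eq_sum i
    _ ≤ ∑ k, ‖hA.eigenvectorBasis k i‖ ^ 2 * hA.eigenvalues j :=
        sum_le_sum fun k _ => mul_le_mul_of_nonneg_left (hj k) (sq_nonneg _)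
    _ = hA.eigenvalues j := by rw [← sum_mul, hA.sum_norm_sq_eigenvectorBasis_apply, one_mul]

end Matrix.IsHermitian

theorem enorm_eq_norm {N : ℕ} (p : Fin N → ℝ) : _root_.enorm p = ‖WithLp.toLp 2 p‖ := by
  simp [_root_.enorm, EuclideanSpace.norm_eq]

section Kmat

variable {n : ℕ}

theorem Kmat_eq (p : Fin (n + 1) → ℝ) :
    Kmat p = vecMulVec (Pi.single (Fin.last n) 1) p + vecMulVec p (Pi.single (Fin.last n) 1)
      - p (Fin.last n) • 1 := by
  ext i j
  simp [Kmat, vecMulVec_apply, Pi.single_apply, one_apply]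

theorem dotProduct_Kmat_mulVec (p x : Fin (n + 1) → ℝ) :
    x ⬝ᵥ Kmat p *ᵥ x = 2 * x (Fin.last n) * (p ⬝ᵥ x) - p (Fin.last n) * (x ⬝ᵥ x) := by
  simp only [Kmat_eq, add_mulVec, sub_mulVec, vecMulVec_mulVec, smul_mulVec, one_mulVec,
    dotProduct_add, dotProduct_sub, op_smul_eq_mul, dotProduct_smul, dotProduct_single,
    single_dotProduct, smul_eq_mul, mul_one, one_mul]
  rw [dotProduct_comm x p]
  ring

theorem neg_enorm_mul_norm_sq_le_dotProduct_Kmat_mulVec (p : Fin (n + 1) → ℝ)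
    (x : EuclideanSpace ℝ (Fin (n + 1))) :
    -_root_.enorm p * ‖x‖ ^ 2 ≤ ⇑x ⬝ᵥ Kmat p *ᵥ ⇑x := by
  have h := inner_sub_norm_mul_norm_mul_sq_le (EuclideanSpace.single (Fin.last n) 1)
    (WithLp.toLp 2 p) x
  simp only [EuclideanSpace.inner_eq_star_dotProduct, PiLp.ofLp_single, star_trivial,
    dotProduct_single, mul_one, PiLp.norm_single, norm_one, one_mul] at h
  have hx : ⇑x ⬝ᵥ ⇑x = ‖x‖ ^ 2 := by
    rw [← real_inner_self_eq_norm_sq]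
    rfl
  rw [dotProduct_Kmat_mulVec, enorm_eq_norm, dotProduct_comm p, hx]
  linarith

theorem neg_enorm_le_eigenvalues_Kmat (p : Fin (n + 1) → ℝ) (hK : (Kmat p).IsHermitian)
    (i : Fin (n + 1)) : -_root_.enorm p ≤ hK.eigenvalues i :=
  hK.le_eigenvalues_of_forall_le
    (fun x => by simpa using neg_enorm_mul_norm_sq_le_dotProduct_Kmat_mulVec p x) i

theorem exists_eigenvalues_Kmat_nonneg (p : Fin (n + 2) → ℝ) (hK : (Kmat p).IsHermitian) :
    ∃ j, 0 ≤ hK.eigenvalues j := by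
  rcases le_total 0 (p (Fin.last (n + 1))) with h | h
  · obtain ⟨j, hj⟩ := hK.exists_re_diag_le_eigenvalues (Fin.last (n + 1))
    simp only [Kmat, of_apply, ↓reduceIte, add_sub_cancel_right, RCLike.re_to_real] at hj
    exact ⟨j, h.trans hj⟩
  · obtain ⟨j, hj⟩ := hK.exists_re_diag_le_eigenvalues 0
    have hne : (0 : Fin (n + 2)) ≠ Fin.last (n + 1) := Fin.last_pos.ne
    simp only [Kmat, of_apply, hne, ↓reduceIte, add_zero, zero_sub, RCLike.re_to_real] at hj
    exact ⟨j, (neg_nonneg.2 h).trans hj⟩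

end Kmat

/-- Pucci minimal bound: `M⁻(K(p)) ≥ -Λ(N-1)|p|`, where
`M⁻(M) = λ·(sum of positive eigenvalues) + Λ·(sum of negative eigenvalues)`
and `N = n + 2`. -/
theorem pucciMin_Kmat_lower_bound (n : ℕ) (lam Lam : ℝ) (h0 : 0 < lam)
    (hlL : lam ≤ Lam) (p : Fin (n + 2) → ℝ) (hK : (Kmat p).IsHermitian) :
    lam * ∑ i, max (hK.eigenvalues i) 0 + Lam * ∑ i, min (hK.eigenvalues i) 0
      ≥ -(Lam * (n + 1) * _root_.enorm p) := by
  obtain ⟨j, hj⟩ := exists_eigenvalues_Kmat_nonneg p hK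
  have hneg : -(((n : ℝ) + 1) * _root_.enorm p) ≤ ∑ i, min (hK.eigenvalues i) 0 := by
    simpa [add_sub_assoc, one_add_one_eq_two] using
      neg_card_sub_one_mul_le_sum_min_zero (m := _root_.enorm p) (Real.sqrt_nonneg _) _
        (neg_enorm_le_eigenvalues_Kmat p hK) hj
  have hpos : 0 ≤ lam * ∑ i, max (hK.eigenvalues i) 0 :=
    mul_nonneg h0.le (sum_nonneg fun i _ => le_max_right _ _)
  calc -(Lam * (n + 1) * _root_.enorm p) = Lam * -(((n : ℝ) + 1) * _root_.enorm p) := by ring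
    _ ≤ Lam * ∑ i, min (hK.eigenvalues i) 0 := mul_le_mul_of_nonneg_left hneg (h0.le.trans hlL)
    _ ≤ _ := le_add_of_nonneg_left hpos
end

section
/- Let 0 < λ ≤ Λ and define the Pucci maximal operator on real symmetric N×N matrices by M⁺(M) = Λ·(sum of positive eigenvalues) + λ·(sum of negative eigenvalues). Let p ∈ ℝ^N and let K be the symmetric matrix with K_ij = −p_N δ_{ij} for i,j < N, K_iN = K_Ni = p_i for i < N, K_NN = p_N. Then M⁺(K) ≤ (Λ(N−1) − λ)|p| ≤ Λ(N−1)|p|. -/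
/-!
`K(p) + p_N • 1 = e_N pᵀ + p e_Nᵀ` has rank at most two, so at least `N - 2` eigenvalues of `K(p)`
equal `-p_N`. Since `tr K(p) = -(N - 2) p_N` and `tr K(p)² = (N - 2) p_N² + 2 |p|²`, the remaining
two eigenvalues are `±|p|`. Hence `M⁺(K(p)) = (Λ - λ) |p| + (N - 2) M⁺(-p_N)`, and
`M⁺(-p_N) ≤ Λ |p_N| ≤ Λ |p|`.
-/

open Finset

/-- Euclidean norm of a vector in `ℝ^N`. -/
noncomputable def enormEucl {N : ℕ} (p : Fin N → ℝ) : ℝ :=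
  Real.sqrt (∑ i, p i ^ 2)

theorem Finset.sum_eq_add_add_nsmul_of_eq_off_pair {ι M : Type*} [Fintype ι] [DecidableEq ι]
    [AddCommMonoid M] {f : ι → M} {i j : ι} {c : M} (hij : i ≠ j)
    (hf : ∀ k, k ≠ i → k ≠ j → f k = c) :
    ∑ k, f k = f i + f j + (Fintype.card ι - 2) • c := by
  have hj : j ∈ univ.erase i := mem_erase.2 ⟨hij.symm, mem_univ j⟩
  rw [← add_sum_erase _ _ (mem_univ i), ← add_sum_erase _ _ hj, ← add_assoc,
    sum_congr rfl fun k hk => hf k (ne_of_mem_erase (mem_of_mem_erase hk)) (ne_of_mem_erase hk),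
    sum_const, card_erase_of_mem hj, card_erase_of_mem (mem_univ i), card_univ]
  rfl

namespace Matrix

theorem rank_add_le {R m n : Type*} [Field R] [Fintype n] (A B : Matrix m n R) :
    (A + B).rank ≤ A.rank + B.rank := by
  rw [rank, rank, rank, mulVecLin_add]
  exact (Submodule.finrank_mono (LinearMap.range_add_le _ _)).trans
    (Submodule.finrank_add_le_finrank_add_finrank _ _)

namespace IsHermitian

variable {𝕜 n : Type*} [RCLike 𝕜] [Fintype n] [DecidableEq n] {A : Matrix n n 𝕜}

theorem sum_eigenvalues_sq (hA : A.IsHermitian) :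
    ∑ i, hA.eigenvalues i ^ 2 = ∑ i, ∑ j, ‖A i j‖ ^ 2 := by
  have hspectral : (A * A).trace = ∑ i, (hA.eigenvalues i : 𝕜) ^ 2 := by
    conv_lhs => rw [hA.spectral_theorem]
    rw [← map_mul, Unitary.conjStarAlgAut_apply, trace_mul_cycle, Unitary.coe_star_mul_self,
      one_mul, diagonal_mul_diagonal, trace_diagonal]
    simp [sq]
  have hentries : (A * A).trace = ∑ i, ∑ j, (‖A i j‖ ^ 2 : 𝕜) := by
    simp only [trace, diag, mul_apply]
    refine sum_congr rfl fun i _ => sum_congr rfl fun j _ => ?_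
    rw [← hA.apply j i, ← RCLike.mul_conj]
    rfl
  exact_mod_cast hspectral.symm.trans hentries

theorem card_eigenvalues_ne_le_rank (hA : A.IsHermitian) (c : ℝ) :
    #{i | hA.eigenvalues i ≠ c} ≤ (A - (c : 𝕜) • 1).rank := by
  set S : Finset n := {i | hA.eigenvalues i ≠ c}
  set v : S → n → 𝕜 := fun i => hA.eigenvectorBasis i
  have hv : LinearIndependent 𝕜 v :=
    (hA.eigenvectorBasis.orthonormal.linearIndependent.map'
      (WithLp.linearEquiv 2 𝕜 (n → 𝕜)).toLinearMap (LinearEquiv.ker _)).comp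
      _ Subtype.val_injective
  have hspan : Submodule.span 𝕜 (Set.range v) ≤ LinearMap.range (A - (c : 𝕜) • 1).mulVecLin := by
    rw [Submodule.span_le]
    rintro _ ⟨⟨i, hi⟩, rfl⟩
    have hne : (hA.eigenvalues i : 𝕜) - c ≠ 0 := by
      simpa [S, sub_eq_zero] using hi
    refine ⟨((hA.eigenvalues i : 𝕜) - c)⁻¹ • hA.eigenvectorBasis i, ?_⟩
    simp only [mulVecLin_apply, mulVec_smul, sub_mulVec, hA.mulVec_eigenvectorBasis, smul_mulVec,
      one_mulVec]
    rw [RCLike.real_smul_eq_coe_smul (K := 𝕜), ← sub_smul, smul_smul, inv_mul_cancel₀ hne,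
      one_smul]
  have := (finrank_span_eq_card hv).symm.trans_le (Submodule.finrank_mono hspan)
  rwa [Fintype.card_coe] at this

end IsHermitian

end Matrix

section Kmat

open Matrix

theorem Kmat_add_smul_one {n : ℕ} (p : Fin (n + 1) → ℝ) :
    Kmat p + p (Fin.last n) • 1 =
      vecMulVec (Pi.single (Fin.last n) 1) p + vecMulVec p (Pi.single (Fin.last n) 1) := by
  ext i j
  simp only [Kmat, Matrix.add_apply, Matrix.smul_apply, of_apply, one_apply, vecMulVec_apply,
    Pi.single_apply, smul_eq_mul]
  split_ifs <;> simp_all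

theorem rank_Kmat_add_smul_one_le {n : ℕ} (p : Fin (n + 1) → ℝ) :
    (Kmat p + p (Fin.last n) • 1).rank ≤ 2 := by
  rw [Kmat_add_smul_one]
  exact (rank_add_le _ _).trans (add_le_add (rank_vecMulVec_le _ _) (rank_vecMulVec_le _ _))

theorem trace_Kmat {n : ℕ} (p : Fin (n + 2) → ℝ) :
    (Kmat p).trace = -n * p (Fin.last (n + 1)) := by
  have h := congrArg trace (Kmat_add_smul_one p)
  simp only [trace_add, trace_smul, trace_one, trace_vecMulVec, single_dotProduct,
    dotProduct_single, Fintype.card_fin, Nat.cast_add, Nat.cast_one, smul_eq_mul, one_mul,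
    mul_one] at h
  linear_combination h

theorem sum_sq_Kmat {n : ℕ} (p : Fin (n + 2) → ℝ) :
    ∑ i, ∑ j, Kmat p i j ^ 2 = n * p (Fin.last (n + 1)) ^ 2 + 2 * ∑ i, p i ^ 2 := by
  simp only [Fin.sum_univ_castSucc (n := n + 1)]
  simp only [Kmat, of_apply, Fin.castSucc_ne_last, (Fin.castSucc_ne_last _).symm, ↓reduceIte,
    Fin.castSucc_inj, ite_pow, sum_ite_eq, mem_univ, sum_add_distrib, sum_const, card_univ,
    Fintype.card_fin, nsmul_eq_mul, add_zero, zero_add, zero_sub, sub_zero, add_sub_cancel_right,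
    even_two, Even.neg_pow, ne_eq, OfNat.ofNat_ne_zero, not_false_eq_true, zero_pow, Nat.cast_add,
    Nat.cast_one]
  ring

theorem exists_pair_eigenvalues_Kmat_eq_neg_last {n : ℕ} (p : Fin (n + 2) → ℝ)
    (hK : (Kmat p).IsHermitian) :
    ∃ i j, i ≠ j ∧ ∀ k, k ≠ i → k ≠ j → hK.eigenvalues k = -p (Fin.last (n + 1)) := by
  have hcard : #{k | hK.eigenvalues k ≠ -p (Fin.last (n + 1))} ≤ 2 := by
    refine (hK.card_eigenvalues_ne_le_rank _).trans ?_
    simpa [sub_eq_add_neg] using rank_Kmat_add_smul_one_le p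
  obtain ⟨t, hsub, ht⟩ := exists_superset_card_eq hcard (by simp)
  obtain ⟨i, j, hij, rfl⟩ := card_eq_two.mp ht
  refine ⟨i, j, hij, fun k hki hkj => ?_⟩
  by_contra hk
  simpa [hki, hkj] using hsub (mem_filter.mpr ⟨mem_univ k, hk⟩)

theorem exists_eigenvalues_Kmat {n : ℕ} (p : Fin (n + 2) → ℝ) (hK : (Kmat p).IsHermitian) :
    ∃ i j, i ≠ j ∧ hK.eigenvalues j = -hK.eigenvalues i ∧ hK.eigenvalues i ^ 2 = ∑ k, p k ^ 2 ∧
      ∀ k, k ≠ i → k ≠ j → hK.eigenvalues k = -p (Fin.last (n + 1)) := by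
  obtain ⟨i, j, hij, hrest⟩ := exists_pair_eigenvalues_Kmat_eq_neg_last p hK
  have hsum : ∀ g : ℝ → ℝ, ∑ k, g (hK.eigenvalues k) =
      g (hK.eigenvalues i) + g (hK.eigenvalues j) + n * g (-p (Fin.last (n + 1))) := by
    intro g
    rw [sum_eq_add_add_nsmul_of_eq_off_pair hij fun k hki hkj => by rw [hrest k hki hkj]]
    simp
  have htrace : hK.eigenvalues i + hK.eigenvalues j + n * -p (Fin.last (n + 1)) =
      -n * p (Fin.last (n + 1)) := by
    rw [← trace_Kmat, hK.trace_eq_sum_eigenvalues]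
    exact (hsum id).symm
  have hsq : hK.eigenvalues i ^ 2 + hK.eigenvalues j ^ 2 + n * (-p (Fin.last (n + 1))) ^ 2 =
      n * p (Fin.last (n + 1)) ^ 2 + 2 * ∑ k, p k ^ 2 := by
    rw [← sum_sq_Kmat]
    simpa only [Real.norm_eq_abs, sq_abs, hsum (· ^ 2)] using hK.sum_eigenvalues_sq
  have hj : hK.eigenvalues j = -hK.eigenvalues i := by linarith
  refine ⟨i, j, hij, hj, ?_, hrest⟩
  rw [hj] at hsq
  linarith

end Kmat

def pucciMaxScalar (lam Lam x : ℝ) : ℝ :=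
  Lam * max x 0 + lam * min x 0

theorem pucciMaxScalar_add_neg (lam Lam x : ℝ) :
    pucciMaxScalar lam Lam x + pucciMaxScalar lam Lam (-x) = (Lam - lam) * |x| := by
  rcases le_total 0 x with hx | hx
  · rw [pucciMaxScalar, pucciMaxScalar, max_eq_left hx, min_eq_right hx,
      max_eq_right (neg_nonpos.2 hx), min_eq_left (neg_nonpos.2 hx), abs_of_nonneg hx]
    ring
  · rw [pucciMaxScalar, pucciMaxScalar, max_eq_right hx, min_eq_left hx,
      max_eq_left (neg_nonneg.2 hx), min_eq_right (neg_nonneg.2 hx), abs_of_nonpos hx]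
    ring

theorem pucciMaxScalar_le_mul_abs {lam Lam : ℝ} (hlam : 0 ≤ lam) (hLam : 0 ≤ Lam) (x : ℝ) :
    pucciMaxScalar lam Lam x ≤ Lam * |x| :=
  calc pucciMaxScalar lam Lam x ≤ Lam * max x 0 :=
        add_le_of_nonpos_right (mul_nonpos_of_nonneg_of_nonpos hlam (min_le_right x 0))
    _ ≤ Lam * |x| := mul_le_mul_of_nonneg_left (max_le (le_abs_self x) (abs_nonneg x)) hLam

theorem abs_le_enormEucl {N : ℕ} (p : Fin N → ℝ) (k : Fin N) : |p k| ≤ enormEucl p :=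
  Real.abs_le_sqrt (single_le_sum (fun i _ => sq_nonneg (p i)) (mem_univ k))

/-- Pucci maximal bound: `M⁺(K(p)) ≤ (Λ(N-1) - λ)|p| ≤ Λ(N-1)|p|`, where
`M⁺(M) = Λ·(sum of positive eigenvalues) + λ·(sum of negative eigenvalues)`
and `N = n + 2`. -/
theorem pucciMax_Kmat_upper_bound (n : ℕ) (lam Lam : ℝ) (h0 : 0 < lam)
    (hlL : lam ≤ Lam) (p : Fin (n + 2) → ℝ) (hK : (Kmat p).IsHermitian) :
    Lam * ∑ i, max (hK.eigenvalues i) 0 + lam * ∑ i, min (hK.eigenvalues i) 0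
        ≤ (Lam * (n + 1) - lam) * enormEucl p
      ∧ (Lam * (n + 1) - lam) * enormEucl p ≤ Lam * (n + 1) * enormEucl p := by
  obtain ⟨i, j, hij, hj, hi, hrest⟩ := exists_eigenvalues_Kmat p hK
  have hpucci : Lam * ∑ k, max (hK.eigenvalues k) 0 + lam * ∑ k, min (hK.eigenvalues k) 0 =
      (Lam - lam) * enormEucl p + n * pucciMaxScalar lam Lam (-p (Fin.last (n + 1))) := by
    rw [mul_sum, mul_sum, ← sum_add_distrib]
    change ∑ k, pucciMaxScalar lam Lam (hK.eigenvalues k) = _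
    rw [sum_eq_add_add_nsmul_of_eq_off_pair hij fun k hki hkj => by rw [hrest k hki hkj], hj,
      pucciMaxScalar_add_neg, enormEucl, ← hi, Real.sqrt_sq_eq_abs]
    simp
  have hlast : pucciMaxScalar lam Lam (-p (Fin.last (n + 1))) ≤ Lam * enormEucl p :=
    (pucciMaxScalar_le_mul_abs h0.le (h0.le.trans hlL) _).trans
      (mul_le_mul_of_nonneg_left (by simpa using abs_le_enormEucl p _) (h0.le.trans hlL))
  have hnorm : 0 ≤ enormEucl p := Real.sqrt_nonneg _
  constructor
  · rw [hpucci]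
    linarith [mul_le_mul_of_nonneg_left hlast (Nat.cast_nonneg n : (0 : ℝ) ≤ n)]
  · linarith [mul_nonneg h0.le hnorm]
end
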